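/- Define R(n,p) = ∑_{s=1}^{n} C(n,s)·2^{−n}·min(1, n·(1−p)^{s−1}). For every fixed ε > 0 there exist constants C, c > 0 such that for all sufficiently large n, setting p = (2+ε)·(log n)/n, one has R(n,p) ≤ C·n^{−ε/4} + C·e^{−c·n}. -/

import Mathlib

/-- `R(n,p) = ∑_{s=1}^n C(n,s) 2^{-n} min(1, n(1-p)^{s-1})`. -/
noncomputable def Rfun (n : ℕ) (p : ℝ) : ℝ :=
  ∑ s ∈ Finset.Icc 1 n,
    (n.choose s : ℝ) / 2 ^ n * min 1 ((n : ℝ) * (1 - p) ^ (s - 1))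

/-!
Split the sum at `m = ⌊(1/2 - δ) n⌋` with `δ = ε / (4 (2 + ε))`. The terms with `s ≤ m` are bounded
by the binomial weights alone, whose total is the lower tail of `Bin(n, 1/2)` and hence at most
`exp (-2 δ² n)` by the Chernoff bound. For `s > m` the factor `n (1 - p)^{s-1}` is at most
`n e^{-p m} ≤ e · n · n^{-(2+ε)(1/2-δ)} = e · n^{-ε/4}`, and the binomial weights sum to at most `1`.
-/

open Finset Real Filter

lemma Nat.le_of_cast_le_mul {m n : ℕ} {a : ℝ} (ha : a ≤ 1) (hm : (m : ℝ) ≤ a * n) : m ≤ n := by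
  have : (m : ℝ) ≤ n := hm.trans (mul_le_of_le_one_left n.cast_nonneg ha)
  exact_mod_cast this

lemma sum_choose_div_two_pow_le_one {n : ℕ} {S : Finset ℕ} (hS : S ⊆ range (n + 1)) :
    ∑ s ∈ S, (n.choose s : ℝ) / 2 ^ n ≤ 1 := by
  rw [← sum_div, div_le_one (by positivity)]
  calc ∑ s ∈ S, (n.choose s : ℝ) ≤ ∑ s ∈ range (n + 1), (n.choose s : ℝ) :=
        sum_le_sum_of_subset_of_nonneg hS fun _ _ _ => by positivity
    _ = 2 ^ n := by exact_mod_cast Nat.sum_range_choose n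

lemma Rfun_le_sum_range_choose_add {n m : ℕ} {p : ℝ} (hp0 : 0 ≤ p) (hp1 : p ≤ 1) (hmn : m ≤ n) :
    Rfun n p ≤ ∑ s ∈ range (m + 1), (n.choose s : ℝ) / 2 ^ n + n * (1 - p) ^ m := by
  set f : ℕ → ℝ := fun s => (n.choose s : ℝ) / 2 ^ n * min 1 ((n : ℝ) * (1 - p) ^ (s - 1))
  have hf : ∀ s, 0 ≤ f s := fun s => by positivity
  have head : ∀ s, f s ≤ (n.choose s : ℝ) / 2 ^ n := fun s =>
    mul_le_of_le_one_right (by positivity) (min_le_left _ _)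
  have tail : ∀ s ∈ Ico (m + 1) (n + 1), f s ≤ (n.choose s : ℝ) / 2 ^ n * (n * (1 - p) ^ m) := by
    intro s hs
    have hms : m ≤ s - 1 := by grind
    refine mul_le_mul_of_nonneg_left ((min_le_right _ _).trans ?_) (by positivity)
    exact mul_le_mul_of_nonneg_left (pow_le_pow_of_le_one (by linarith) (by linarith) hms)
      (Nat.cast_nonneg n)
  calc Rfun n p ≤ ∑ s ∈ range (n + 1), f s :=
        sum_le_sum_of_subset_of_nonneg (fun s => by simp) fun s _ _ => hf s
    _ = ∑ s ∈ range (m + 1), f s + ∑ s ∈ Ico (m + 1) (n + 1), f s :=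
        (sum_range_add_sum_Ico f (by omega)).symm
    _ ≤ ∑ s ∈ range (m + 1), (n.choose s : ℝ) / 2 ^ n +
          (∑ s ∈ Ico (m + 1) (n + 1), (n.choose s : ℝ) / 2 ^ n) * (n * (1 - p) ^ m) := by
        rw [sum_mul]
        exact add_le_add (sum_le_sum fun s _ => head s) (sum_le_sum tail)
    _ ≤ ∑ s ∈ range (m + 1), (n.choose s : ℝ) / 2 ^ n + n * (1 - p) ^ m := by
        have h1p : 0 ≤ 1 - p := by linarith
        have hsub : Ico (m + 1) (n + 1) ⊆ range (n + 1) := fun s hs => by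
          simp only [mem_Ico, mem_range] at hs ⊢; omega
        exact add_le_add le_rfl
          (mul_le_of_le_one_left (by positivity) (sum_choose_div_two_pow_le_one hsub))

-- Hoeffding's lemma for a fair coin.
lemma exp_neg_add_one_div_two_le (t : ℝ) : (exp (-t) + 1) / 2 ≤ exp (-(t / 2) + t ^ 2 / 8) := by
  have hcosh : (exp (-t) + 1) / 2 = exp (-(t / 2)) * cosh (t / 2) := by
    rw [cosh_eq, mul_div_assoc', mul_add, ← exp_add, ← exp_add]
    rw [show -(t / 2) + t / 2 = 0 by ring, show -(t / 2) + -(t / 2) = -t by ring, exp_zero]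
    ring
  rw [hcosh, exp_add]
  gcongr
  exact (cosh_le_exp_half_sq _).trans_eq (by ring_nf)

lemma sum_range_choose_div_two_pow_le_exp {n m : ℕ} {δ : ℝ} (hδ : 0 ≤ δ)
    (hm : (m : ℝ) ≤ (1 / 2 - δ) * n) :
    ∑ s ∈ range (m + 1), (n.choose s : ℝ) / 2 ^ n ≤ exp (-(2 * δ ^ 2 * n)) := by
  -- the exponential moment method, with the optimal `t = 4 δ`
  set t := 4 * δ
  have hmn : m ≤ n := Nat.le_of_cast_le_mul (by linarith) hm
  set g : ℕ → ℝ := fun s => exp (t * m) / 2 ^ n * (exp (-t) ^ s * 1 ^ (n - s) * n.choose s)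
  calc ∑ s ∈ range (m + 1), (n.choose s : ℝ) / 2 ^ n ≤ ∑ s ∈ range (m + 1), g s := by
        refine sum_le_sum fun s hs => ?_
        have hsm : (s : ℝ) ≤ m := by exact_mod_cast Nat.lt_succ_iff.mp (mem_range.mp hs)
        have : 1 ≤ exp (t * m) * exp (-t) ^ s := by
          rw [← exp_nat_mul, ← exp_add, one_le_exp_iff]
          nlinarith
        calc (n.choose s : ℝ) / 2 ^ n ≤ (n.choose s : ℝ) / 2 ^ n * (exp (t * m) * exp (-t) ^ s) :=
              le_mul_of_one_le_right (by positivity) this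
          _ = g s := by simp only [g, one_pow]; ring
    _ ≤ ∑ s ∈ range (n + 1), g s :=
        sum_le_sum_of_subset_of_nonneg (range_subset_range.mpr (by omega))
          fun s _ _ => by positivity
    _ = exp (t * m) * ((exp (-t) + 1) / 2) ^ n := by
        rw [← mul_sum, ← add_pow, div_pow]; ring
    _ ≤ exp (t * m) * exp (-(t / 2) + t ^ 2 / 8) ^ n := by
        gcongr
        exact exp_neg_add_one_div_two_le t
    _ = exp (t * m + n * (-(t / 2) + t ^ 2 / 8)) := by rw [← exp_nat_mul, exp_add]
    _ ≤ exp (-(2 * δ ^ 2 * n)) := by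
        gcongr
        nlinarith

lemma one_sub_pow_le_exp_one_sub_mul {p x : ℝ} {m : ℕ} (hp0 : 0 ≤ p) (hp1 : p ≤ 1)
    (hx : x ≤ m + 1) : (1 - p) ^ m ≤ exp (1 - p * x) := by
  calc (1 - p) ^ m ≤ exp (-p) ^ m := pow_le_pow_left₀ (by linarith) (one_sub_le_exp_neg p) m
    _ = exp (-(p * m)) := by rw [← exp_nat_mul]; ring_nf
    _ ≤ exp (1 - p * x) := by
        gcongr
        nlinarith

lemma mul_exp_neg_one_add_mul_log {x : ℝ} (hx : 0 < x) (a : ℝ) :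
    x * exp (-((1 + a) * log x)) = x ^ (-a) := by
  rw [rpow_def_of_pos hx]
  nth_rewrite 1 [← exp_log hx]
  rw [← exp_add]
  ring_nf

lemma eventually_mul_log_div_le_one (K : ℝ) : ∀ᶠ n : ℕ in atTop, K * log n / n ≤ 1 := by
  have hlog : Tendsto (fun x : ℝ => log x / x) atTop (nhds 0) := by
    simpa using tendsto_pow_log_div_mul_add_atTop 1 0 1 one_ne_zero
  have hK : Tendsto (fun n : ℕ => K * log n / n) atTop (nhds 0) := by
    simpa [mul_div_assoc, Function.comp_def] using (hlog.const_mul K).comp tendsto_natCast_atTop_atTop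
  exact (hK.eventually_lt_const one_pos).mono fun _ h => h.le

/-- For every `ε > 0` there are constants `C, c > 0` such that for all sufficiently
large `n`, with `p = (2+ε) log n / n`, `R(n,p) ≤ C n^{-ε/4} + C e^{-c n}`. -/
theorem stmt18 (ε : ℝ) (hε : 0 < ε) :
    ∃ C c : ℝ, 0 < C ∧ 0 < c ∧ ∃ N : ℕ, ∀ n : ℕ, N ≤ n →
      Rfun n ((2 + ε) * Real.log n / n) ≤
        C * (n : ℝ) ^ (-(ε / 4)) + C * Real.exp (-(c * n)) := by
  set δ := ε / (4 * (2 + ε)) with hδ_def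
  have hδ : 0 < δ := by positivity
  have hδ_le : δ ≤ 1 / 2 := by rw [hδ_def, div_le_iff₀ (by positivity)]; linarith
  have hα : (2 + ε) * (1 / 2 - δ) = 1 + ε / 4 := by rw [hδ_def]; field_simp; ring
  refine ⟨exp 1, 2 * δ ^ 2, exp_pos 1, by positivity, ?_⟩
  obtain ⟨N, hN⟩ :=
    ((eventually_mul_log_div_le_one (2 + ε)).and (eventually_gt_atTop 0)).exists_forall_of_atTop
  refine ⟨N, fun n hNn => ?_⟩
  obtain ⟨hp1, hn⟩ := hN n hNn
  have hn : (0 : ℝ) < n := by exact_mod_cast hn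
  set p := (2 + ε) * log n / n
  have hp0 : 0 ≤ p := div_nonneg (mul_nonneg (by linarith) (log_natCast_nonneg n)) hn.le
  have hpn : p * ((1 / 2 - δ) * n) = (1 + ε / 4) * log n := by simp only [p, ← hα]; field_simp
  set m := ⌊(1 / 2 - δ) * n⌋₊
  have hm : (m : ℝ) ≤ (1 / 2 - δ) * n := Nat.floor_le (by nlinarith)
  calc Rfun n p ≤ ∑ s ∈ range (m + 1), (n.choose s : ℝ) / 2 ^ n + n * (1 - p) ^ m :=
        Rfun_le_sum_range_choose_add hp0 hp1 (Nat.le_of_cast_le_mul (by linarith) hm)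
    _ ≤ exp (-(2 * δ ^ 2 * n)) + n * exp (1 - (1 + ε / 4) * log n) := by
        gcongr
        · exact sum_range_choose_div_two_pow_le_exp hδ.le hm
        · rw [← hpn]
          exact one_sub_pow_le_exp_one_sub_mul hp0 hp1 (Nat.lt_floor_add_one _).le
    _ ≤ exp 1 * (n : ℝ) ^ (-(ε / 4)) + exp 1 * exp (-(2 * δ ^ 2 * n)) := by
        rw [sub_eq_add_neg, exp_add, mul_left_comm, mul_exp_neg_one_add_mul_log hn]
        nlinarith [one_le_exp zero_le_one, exp_pos (-(2 * δ ^ 2 * n))]
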